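/- Let S be a commutative ring, σ ∈ Aut(S) of order n with fixed ring S_0, a, b, α ∈ S^×. If there is a Hamming-weight preserving isomorphism G : S_a → S_b with G|_S = τ for some τ ∈ Aut(S) commuting with σ, then the subgroups of S^× generated by {b} ∪ N_m^σ(S^×) and by {τ(a)} ∪ N_m^σ(S^×) are equal. -/

import Mathlib

open Finset

noncomputable section

namespace PetitFormal

variable {S : Type*}

/-- Partial norm `N_i^τ(β) = ∏_{j=0}^{i-1} τ^j(β)`. -/
def pnorm [CommRing S] (τ : RingAut S) (i : ℕ) (β : S) : S :=
  ∏ j ∈ Finset.range i, (τ ^ j) β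

/-- Multiplication in the skew polynomial ring `S[t;σ]`, with `t·a = σ(a)·t`,
modelled on finitely supported functions `ℕ →₀ S`. -/
def skewMul [CommRing S] (σ : RingAut S) (x y : ℕ →₀ S) : ℕ →₀ S :=
  x.sum fun i c => y.sum fun j d => Finsupp.single (i + j) (c * (σ ^ i) d)

/-- Embedding of degree `< m` polynomials into `ℕ →₀ S`. -/
def toPoly [CommRing S] {m : ℕ} (x : Fin m → S) : ℕ →₀ S :=
  ∑ i : Fin m, Finsupp.single (i : ℕ) (x i)

/-- One pass of right division by the monic polynomial `f = t^m - f0(t)`: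
`reduceAux σ m f0 K` reduces a skew polynomial supported in `[0, m+K)`
to one supported in `[0, m)`, using `t^{m+j} ≡ ∑_i σ^j(f0 i) t^{j+i}` (mod_r f). -/
def reduceAux [CommRing S] (σ : RingAut S) (m : ℕ) (f0 : Fin m → S) :
    ℕ → (ℕ →₀ S) → (ℕ →₀ S)
  | 0, x => x
  | K + 1, x =>
      reduceAux σ m f0 K
        (x - Finsupp.single (m + K) (x (m + K))
          + ∑ j : Fin m, Finsupp.single (K + (j : ℕ)) (x (m + K) * (σ ^ K) (f0 j)))

/-- Multiplication in the (generally nonassociative) Petit algebra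
`S_f = S[t;σ]/S[t;σ](t^m - f0(t))`: multiply in `S[t;σ]` and reduce by right
division by `f = t^m - f0(t)`. -/
def petitMul [CommRing S] (σ : RingAut S) (m : ℕ) (f0 : Fin m → S)
    (x y : Fin m → S) : Fin m → S :=
  fun d => (reduceAux σ m f0 m (skewMul σ (toPoly x) (toPoly y))) (d : ℕ)

/-- The coefficient vector of the constant `a`, so that `t^m - f0 = t^m - a`. -/
def constF [CommRing S] (m : ℕ) (a : S) : Fin m → S :=
  fun i => if (i : ℕ) = 0 then a else 0

/-- Multiplication in the Petit algebra `S_a = S[t;σ]/S[t;σ](t^m - a)`. -/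
def petitMulC [CommRing S] (σ : RingAut S) (m : ℕ) (a : S) :
    (Fin m → S) → (Fin m → S) → (Fin m → S) :=
  petitMul σ m (constF m a)

/-- The monomial `c t^k` as an element of the Petit algebra (zero if `k ≥ m`). -/
def mono [CommRing S] (m : ℕ) (c : S) (k : ℕ) : Fin m → S :=
  fun i => if (i : ℕ) = k then c else 0

/-- The identity `1 = 1·t^0` of the Petit algebra. -/
def pone [CommRing S] (m : ℕ) : Fin m → S := mono m 1 0

/-- Left-nested power `L(z,s) = z(z(⋯(z)))` (`s` factors) in the Petit algebra. -/
def lpow [CommRing S] (σ : RingAut S) (m : ℕ) (f0 : Fin m → S) (z : Fin m → S) :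
    ℕ → Fin m → S
  | 0 => pone m
  | s + 1 => petitMul σ m f0 z (lpow σ m f0 z s)

/-- `G` is a (unital) ring homomorphism from the Petit algebra `S_f` to `S_g`. -/
def IsPetitHom [CommRing S] (σ : RingAut S) (m : ℕ) (f0 g0 : Fin m → S)
    (G : (Fin m → S) → (Fin m → S)) : Prop :=
  (∀ x y, G (x + y) = G x + G y) ∧
  (∀ x y, G (petitMul σ m f0 x y) = petitMul σ m g0 (G x) (G y)) ∧
  G (pone m) = pone m

/-- `G` is a (unital) ring endomorphism of the skew polynomial ring `S[t;σ]`. -/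
def IsSkewHom [CommRing S] (σ : RingAut S) (G : (ℕ →₀ S) → (ℕ →₀ S)) : Prop :=
  (∀ x y, G (x + y) = G x + G y) ∧
  (∀ x y, G (skewMul σ x y) = skewMul σ (G x) (G y)) ∧
  G (Finsupp.single 0 1) = Finsupp.single 0 1

/-- `G` is a (unital) ring homomorphism from `S[t;σ]` to the Petit algebra `S_g`. -/
def IsSkewToPetitHom [CommRing S] (σ : RingAut S) (m : ℕ) (g0 : Fin m → S)
    (G : (ℕ →₀ S) → (Fin m → S)) : Prop :=
  (∀ x y, G (x + y) = G x + G y) ∧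
  (∀ x y, G (skewMul σ x y) = petitMul σ m g0 (G x) (G y)) ∧
  G (Finsupp.single 0 1) = pone m

/-- The monomial map `G_{τ,α,k}` on `S[t;σ]`:
`∑ a_i t^i ↦ ∑ τ(a_i) (α t^k)^i = ∑ τ(a_i) N_i^{σ^k}(α) t^{ik}`. -/
def skewMonomialMap [CommRing S] (σ τ : RingAut S) (α : S) (k : ℕ)
    (x : ℕ →₀ S) : ℕ →₀ S :=
  x.sum fun i c => Finsupp.single (i * k) (τ c * pnorm (σ ^ k) i α)

/-- The monomial map `G_{τ,α,k}` from `S[t;σ]` into the Petit algebra `S_g`: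
`∑ a_i t^i ↦ ∑ τ(a_i) (α t^k)^i`, powers computed by left nesting. -/
def skewToPetitMonomialMap [CommRing S] (σ τ : RingAut S) (m : ℕ)
    (g0 : Fin m → S) (α : S) (k : ℕ) (x : ℕ →₀ S) : Fin m → S :=
  x.sum fun i c => τ c • lpow σ m g0 (mono m α k) i

/-- The monomial map `G_{τ,α,k}` between Petit algebras of degree `m`:
`∑_{i<m} a_i t^i ↦ ∑_{i<m} τ(a_i) (α t^k)^i`, powers computed by left nesting
in the codomain `S_g`. -/
def petitMonomialMap [CommRing S] (σ τ : RingAut S) (m : ℕ)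
    (g0 : Fin m → S) (α : S) (k : ℕ) (x : Fin m → S) : Fin m → S :=
  ∑ i : Fin m, τ (x i) • lpow σ m g0 (mono m α k) (i : ℕ)

/-- The Hamming weight: the number of nonzero coefficients. -/
def hwt [CommRing S] {m : ℕ} (x : Fin m → S) : ℕ := by
  classical exact (Finset.univ.filter fun i => x i ≠ 0).card

end PetitFormal

open PetitFormal

/-!
A weight-preserving `G` sends `t` to a monomial `α tᵏ`, hence the left power `tⁱ` to
`βᵢ t^(ik mod m)`. Weight-two elements force `i ↦ ik mod m` to be injective on `[0, m)`, so
`gcd(k, m) = 1`, and surjectivity of `G` makes `α` a unit. Comparing the images of `tⁱ c` and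
`σⁱ(c) tⁱ` gives `σ^(ik mod m) = σⁱ`, which turns the recursion for `βᵢ` into
`βᵢ = N_i(α) σⁱ(b)^⌊ik/m⌋` for `i < m`, and then `τ(a) = G(tᵐ) = N_m(α) σᵐ(b)^(k-1) b`.
If `k ≥ 2`, comparing `G(t · tʲ)` with `G(tʲ · t)` at a `j` with `⌊jk/m⌋ = 1` gives `σ(b) = b`.
Either way `τ(a) = N_m(α) bᵏ`, and since `gcd(k, m) = 1` and `bᵐ = N_m(b)` when `σ(b) = b`,
`b` and `τ(a)` generate the same subgroup modulo norms.
-/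

namespace Subgroup

theorem mem_of_pow_mem_of_coprime {G : Type*} [Group G] {H : Subgroup G} {g : G}
    {k e : ℕ} (hk : g ^ k ∈ H) (he : g ^ e ∈ H) (hke : k.Coprime e) : g ∈ H := by
  have hg : g = (g ^ k) ^ Nat.gcdA k e * (g ^ e) ^ Nat.gcdB k e := by
    rw [← zpow_natCast, ← zpow_natCast, ← zpow_mul, ← zpow_mul, ← zpow_add,
      ← Nat.gcd_eq_gcd_ab, hke, Nat.cast_one, zpow_one]
  rw [hg]
  exact mul_mem (zpow_mem hk _) (zpow_mem he _)

theorem closure_singleton_union_eq_mul_pow {G : Type*} [Group G] {N : Set G}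
    {g ν : G} {k e : ℕ} (hν : ν ∈ N) (he : g ^ e ∈ closure N) (hke : k.Coprime e) :
    closure ({g} ∪ N) = closure ({ν * g ^ k} ∪ N) := by
  have hνN : ∀ {M : Set G}, ν ∈ closure (M ∪ N) := subset_closure (Or.inr hν)
  apply le_antisymm <;> rw [closure_le] <;> rintro x (rfl | hx)
  · have hgk : x ^ k ∈ closure ({ν * x ^ k} ∪ N) := by
      simpa using mul_mem (inv_mem hνN)
        (subset_closure (Set.mem_union_left N (Set.mem_singleton (ν * x ^ k))))
    exact mem_of_pow_mem_of_coprime hgk (closure_mono Set.subset_union_right he) hke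
  · exact subset_closure (Or.inr hx)
  · exact mul_mem hνN (pow_mem (subset_closure (Set.mem_union_left N (Set.mem_singleton g))) k)
  · exact subset_closure (Or.inr hx)

end Subgroup

namespace PetitFormal

theorem succ_mul_div (s k m : ℕ) : (s + 1) * k / m = s * k / m + (k + s * k % m) / m := by
  rcases Nat.eq_zero_or_pos m with rfl | hm
  · simp
  conv_lhs => rw [Nat.succ_mul, ← Nat.div_add_mod (s * k) m]
  rw [show m * (s * k / m) + s * k % m + k = k + s * k % m + m * (s * k / m) by ring,
    Nat.add_mul_div_left _ _ hm, add_comm]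

theorem exists_lt_mul_div_eq_one {k m : ℕ} (hk : 2 ≤ k) (hkm : k < m) :
    ∃ j < m, j * k / m = 1 := by
  have hle : m / k * k ≤ m := Nat.div_mul_le_self m k
  have hlt : m < m / k * k + k := by
    simpa [mul_add, mul_comm] using Nat.lt_mul_div_succ m (show 0 < k by omega)
  have h2 : m / k * 2 ≤ m / k * k := Nat.mul_le_mul_left _ hk
  refine ⟨m / k + 1, by omega, Nat.div_eq_of_lt_le ?_ ?_⟩ <;> rw [add_mul] <;> omega

theorem coprime_of_injOn_mul_mod {k m : ℕ} (hm : 0 < m)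
    (h : ∀ {i j}, i < m → j < m → i * k % m = j * k % m → i = j) : k.Coprime m := by
  let f : Fin m → Fin m := fun i => ⟨i * k % m, Nat.mod_lt _ hm⟩
  have hf : Function.Injective f := fun i j hij => Fin.ext (h i.isLt j.isLt (congrArg Fin.val hij))
  obtain ⟨i, hi⟩ := (Finite.injective_iff_surjective.mp hf) ⟨1 % m, Nat.mod_lt _ hm⟩
  exact Nat.coprime_of_mul_modEq_one i (by rw [Nat.ModEq, mul_comm]; exact congrArg Fin.val hi)

variable {S : Type*} [CommRing S]

theorem skewMul_single_single (σ : RingAut S) (i j : ℕ) (c d : S) :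
    skewMul σ (Finsupp.single i c) (Finsupp.single j d)
      = Finsupp.single (i + j) (c * (σ ^ i) d) := by
  simp [skewMul]

theorem toPoly_mono {m k : ℕ} (c : S) (hk : k < m) :
    toPoly (mono m c k) = Finsupp.single k c := by
  rw [toPoly, Finset.sum_eq_single ⟨k, hk⟩]
  · simp [mono]
  · intro i _ hi
    simp [mono, Fin.val_ne_of_ne hi]
  · simp

theorem reduceAux_single_of_lt (σ : RingAut S) {m : ℕ} (f0 : Fin m → S) {d : ℕ} (hd : d < m)
    (v : S) (K : ℕ) : reduceAux σ m f0 K (Finsupp.single d v) = Finsupp.single d v := by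
  induction K with
  | zero => rfl
  | succ K ih => simpa [reduceAux, Finsupp.single_eq_of_ne (show m + K ≠ d by omega)] using ih

theorem reduceAux_constF_single_add (σ : RingAut S) {m r K : ℕ} (a v : S) (hr : r < m)
    (hrK : r < K) :
    reduceAux σ m (constF m a) K (Finsupp.single (m + r) v)
      = Finsupp.single r (v * (σ ^ r) a) := by
  induction K with
  | zero => omega
  | succ K ih =>
    rcases (Nat.lt_succ_iff.mp hrK).lt_or_eq with h | rfl
    · simpa [reduceAux, Finsupp.single_eq_of_ne (show m + K ≠ m + r by omega)] using ih h
    · have hsum : ∑ j : Fin m, Finsupp.single (r + (j : ℕ)) (v * (σ ^ r) (constF m a j))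
          = Finsupp.single r (v * (σ ^ r) a) := by
        rw [Finset.sum_eq_single ⟨0, by omega⟩]
        · simp [constF]
        · intro j _ hj
          simp [constF, Fin.val_ne_of_ne hj]
        · simp
      rw [reduceAux, Finsupp.single_eq_same, sub_self, zero_add, hsum]
      exact reduceAux_single_of_lt σ _ hr _ _

theorem single_apply_eq_mono (m d : ℕ) (v : S) :
    (fun i : Fin m => Finsupp.single d v (i : ℕ)) = mono m v d := by
  ext i
  simp [Finsupp.single_apply, mono, eq_comm]

/-- The exponent `(i + j) / m` is `0` or `1`: it records whether `tⁱ⁺ʲ` had to be reduced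
with `tᵐ = a`. -/
theorem petitMul_mono_mono (σ : RingAut S) {m i j : ℕ} (a c d : S) (hi : i < m) (hj : j < m) :
    petitMul σ m (constF m a) (mono m c i) (mono m d j)
      = mono m (c * (σ ^ i) d * ((σ ^ ((i + j) % m)) a) ^ ((i + j) / m)) ((i + j) % m) := by
  unfold petitMul
  rw [toPoly_mono c hi, toPoly_mono d hj, skewMul_single_single, ← single_apply_eq_mono]
  rcases lt_or_ge (i + j) m with h | h
  · rw [Nat.mod_eq_of_lt h, Nat.div_eq_of_lt h, pow_zero, mul_one,
      reduceAux_single_of_lt σ _ h]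
  · have hq : (i + j) / m = 1 := by
      rw [Nat.div_eq_iff (by omega)]; omega
    have hr : (i + j) % m = i + j - m := by
      rw [Nat.mod_eq_sub_mod h, Nat.mod_eq_of_lt (by omega)]
    rw [hq, hr, pow_one, show i + j = m + (i + j - m) by omega,
      reduceAux_constF_single_add σ a _ (by omega) (by omega), Nat.add_sub_cancel_left]

theorem petitMul_mono_zero_left (σ : RingAut S) {m j : ℕ} (a c d : S) (hj : j < m) :
    petitMul σ m (constF m a) (mono m c 0) (mono m d j) = mono m (c * d) j := by
  rw [petitMul_mono_mono σ a c d (by omega) hj, zero_add, Nat.mod_eq_of_lt hj,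
    Nat.div_eq_of_lt hj]
  simp

theorem petitMul_mono_zero_right (σ : RingAut S) {m i : ℕ} (a c d : S) (hi : i < m) :
    petitMul σ m (constF m a) (mono m c i) (mono m d 0) = mono m (c * (σ ^ i) d) i := by
  rw [petitMul_mono_mono σ a c d hi (by omega), add_zero, Nat.mod_eq_of_lt hi,
    Nat.div_eq_of_lt hi]
  simp

theorem petitMul_X_comm (σ : RingAut S) (a : S) {m j : ℕ} (hm : 1 < m) (hj : j < m) :
    petitMul σ m (constF m a) (mono m 1 1) (mono m 1 j)
      = petitMul σ m (constF m a) (mono m 1 j) (mono m 1 1) := by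
  rw [petitMul_mono_mono σ a 1 1 hm hj, petitMul_mono_mono σ a 1 1 hj hm, add_comm]
  simp

theorem lpow_X_of_lt (σ : RingAut S) (a : S) {m s : ℕ} (hs : s < m) :
    lpow σ m (constF m a) (mono m 1 1) s = mono m 1 s := by
  induction s with
  | zero => rfl
  | succ s ih =>
    rw [lpow, ih (by omega), petitMul_mono_mono σ a 1 1 (by omega) (by omega),
      Nat.div_eq_of_lt (by omega), Nat.mod_eq_of_lt (by omega), add_comm]
    simp

theorem lpow_X_self (σ : RingAut S) (a : S) {m : ℕ} (hm : 1 < m) :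
    lpow σ m (constF m a) (mono m 1 1) m = mono m a 0 := by
  obtain ⟨s, rfl⟩ : ∃ s, m = s + 1 := ⟨m - 1, by omega⟩
  rw [lpow, lpow_X_of_lt σ a (Nat.lt_succ_self s),
    petitMul_mono_mono σ a 1 1 hm (Nat.lt_succ_self s), add_comm, Nat.mod_self,
    Nat.div_self (by omega)]
  simp

theorem IsPetitHom.map_lpow {σ : RingAut S} {m : ℕ} {f0 g0 : Fin m → S}
    {G : (Fin m → S) → (Fin m → S)} (hG : IsPetitHom σ m f0 g0 G) (z : Fin m → S)
    (s : ℕ) :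
    G (lpow σ m f0 z s) = lpow σ m g0 (G z) s := by
  induction s with
  | zero => exact hG.2.2
  | succ s ih => rw [lpow, lpow, hG.2.1, ih]

theorem mono_add_mono (m d : ℕ) (c c' : S) : mono m c d + mono m c' d = mono m (c + c') d := by
  ext i
  simp only [Pi.add_apply, mono]
  split_ifs <;> simp

theorem mono_apply_self {m d : ℕ} (c : S) (hd : d < m) : mono m c d ⟨d, hd⟩ = c := if_pos rfl

theorem mono_injective {m d : ℕ} (hd : d < m) : Function.Injective fun c : S => mono m c d :=
  fun c c' h => by simpa only [mono_apply_self _ hd] using congrFun h ⟨d, hd⟩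

theorem eq_of_mono_eq_mono_one [Nontrivial S] {m d e : ℕ} {c : S} (he : e < m)
    (h : mono m c d = mono m 1 e) : d = e ∧ c = 1 := by
  have h' := congrFun h ⟨e, he⟩
  simp only [mono, if_true] at h'
  split_ifs at h' with hed
  · exact ⟨hed.symm, h'⟩
  · exact absurd h'.symm one_ne_zero

theorem hwt_eq_card [DecidableEq S] {m : ℕ} (x : Fin m → S) : hwt x = #{i | x i ≠ 0} := by
  unfold hwt
  congr!

theorem hwt_mono_le_one (m d : ℕ) (c : S) : hwt (mono m c d) ≤ 1 := by
  classical
  rw [hwt_eq_card, Finset.card_le_one]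
  intro i hi j hj
  simp only [Finset.mem_filter, mono, ne_eq, ite_eq_right_iff, not_forall] at hi hj
  exact Fin.ext (hi.2.1.trans hj.2.1.symm)

theorem hwt_mono_one [Nontrivial S] {m d : ℕ} (hd : d < m) : hwt (mono m (1 : S) d) = 1 := by
  classical
  rw [hwt_eq_card, Finset.card_eq_one]
  refine ⟨⟨d, hd⟩, Finset.ext fun i => ?_⟩
  simp [mono, Fin.ext_iff]

theorem hwt_mono_one_add_mono_one [Nontrivial S] {m i j : ℕ} (hi : i < m) (hj : j < m)
    (hij : i ≠ j) : hwt (mono m (1 : S) i + mono m 1 j) = 2 := by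
  classical
  rw [hwt_eq_card, Finset.card_eq_two]
  refine ⟨⟨i, hi⟩, ⟨j, hj⟩, by simp [Fin.ext_iff, hij], Finset.ext fun e => ?_⟩
  rw [Finset.mem_filter]
  by_cases hei : (e : ℕ) = i <;> by_cases hej : (e : ℕ) = j <;> simp_all [mono, Fin.ext_iff]

theorem exists_eq_mono_of_hwt_eq_one {m : ℕ} {x : Fin m → S} (h : hwt x = 1) :
    ∃ i : Fin m, x = mono m (x i) i := by
  classical
  rw [hwt_eq_card, Finset.card_eq_one] at h
  obtain ⟨i, hi⟩ := h
  refine ⟨i, funext fun j => ?_⟩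
  by_cases hji : j = i
  · simp [hji, mono]
  · have : j ∉ ({i} : Finset (Fin m)) := by simpa using hji
    rw [← hi] at this
    simp only [Finset.mem_filter, Finset.mem_univ, true_and, not_not] at this
    simp [this, mono, Fin.val_ne_of_ne hji]

theorem pnorm_succ (σ : RingAut S) (s : ℕ) (α : S) :
    pnorm σ (s + 1) α = α * σ (pnorm σ s α) := by
  simp only [pnorm, Finset.prod_range_succ', pow_zero, map_prod, pow_succ']
  exact mul_comm _ _

theorem pnorm_succ' (σ : RingAut S) (s : ℕ) (α : S) :
    pnorm σ (s + 1) α = pnorm σ s α * (σ ^ s) α :=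
  Finset.prod_range_succ _ _

theorem IsUnit.pnorm {α : S} (hα : IsUnit α) (σ : RingAut S) (s : ℕ) :
    IsUnit (pnorm σ s α) :=
  IsUnit.prod_iff.mpr fun j _ => hα.map (σ ^ j)

theorem pow_apply_of_apply_eq {σ : RingAut S} {β : S} (hβ : σ β = β) (j : ℕ) :
    (σ ^ j) β = β := by
  induction j with
  | zero => rfl
  | succ j ih => rw [pow_succ', RingAut.mul_apply, ih, hβ]

theorem pnorm_of_apply_eq {σ : RingAut S} {β : S} (hβ : σ β = β) (s : ℕ) :
    pnorm σ s β = β ^ s := by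
  simp [pnorm, pow_apply_of_apply_eq hβ]

/-- `βₛ` with `(α tᵏ)ˢ = βₛ t^(sk mod m)` in `S_b`, see `lpow_mono`. -/
def monoPowCoeff (σ : RingAut S) (m : ℕ) (b α : S) (k : ℕ) : ℕ → S
  | 0 => 1
  | s + 1 => α * (σ ^ k) (monoPowCoeff σ m b α k s)
      * ((σ ^ ((s + 1) * k % m)) b) ^ ((k + s * k % m) / m)

theorem lpow_mono {m k : ℕ} (σ : RingAut S) (b α : S) (hk : k < m) (s : ℕ) :
    lpow σ m (constF m b) (mono m α k) s = mono m (monoPowCoeff σ m b α k s) (s * k % m) := by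
  induction s with
  | zero => simp [lpow, pone, monoPowCoeff]
  | succ s ih =>
    have hidx : (k + s * k % m) % m = (s + 1) * k % m := by
      rw [Nat.add_mod_mod, add_comm, Nat.succ_mul]
    rw [lpow, ih, petitMul_mono_mono σ b α _ hk (Nat.mod_lt _ (by omega)), hidx, monoPowCoeff]

theorem isUnit_monoPowCoeff (σ : RingAut S) (m : ℕ) {b α : S} (hb : IsUnit b) (hα : IsUnit α)
    (k s : ℕ) : IsUnit (monoPowCoeff σ m b α k s) := by
  induction s with
  | zero => exact isUnit_one
  | succ s ih => exact (hα.mul (ih.map _)).mul ((hb.map _).pow _)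

theorem monoPowCoeff_eq_of_lt {σ : RingAut S} {m k : ℕ} (b α : S) (hk : k < m)
    (hD : ∀ i < m, σ ^ (i * k % m) = σ ^ i) {s : ℕ} (hs : s < m) :
    monoPowCoeff σ m b α k s = pnorm σ s α * ((σ ^ s) b) ^ (s * k / m) := by
  induction s with
  | zero => simp [monoPowCoeff, pnorm]
  | succ s ih =>
    have hσk : σ ^ k = σ := by simpa [Nat.mod_eq_of_lt hk] using hD 1 (by omega)
    have hσs : σ ((σ ^ s) b) = (σ ^ (s + 1)) b := by rw [pow_succ']; rfl
    rw [monoPowCoeff, ih (by omega), hσk, hD _ hs, succ_mul_div, pnorm_succ, map_mul, map_pow,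
      hσs]
    ring

theorem monoPowCoeff_self {σ : RingAut S} {m k : ℕ} (b α : S) (hm : 1 < m) (hk : k < m)
    (hD : ∀ i < m, σ ^ (i * k % m) = σ ^ i) (hkb : k = 1 ∨ σ b = b) :
    monoPowCoeff σ m b α k m = pnorm σ m α * b ^ k := by
  obtain ⟨s, rfl⟩ : ∃ s, m = s + 1 := ⟨m - 1, by omega⟩
  have hσk : σ ^ k = σ := by simpa [Nat.mod_eq_of_lt hk] using hD 1 hm
  have hq : s * k / (s + 1) + (k + s * k % (s + 1)) / (s + 1) = k := by
    rw [← succ_mul_div, Nat.mul_div_cancel_left _ (Nat.succ_pos s)]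
  rw [monoPowCoeff, monoPowCoeff_eq_of_lt b α hk hD (Nat.lt_succ_self s), hσk, Nat.mul_mod_right,
    pnorm_succ, map_mul, map_pow]
  rcases hkb with rfl | hσb
  · simp [Nat.div_eq_of_lt (Nat.lt_succ_self s), add_comm 1 s]
  · conv_rhs => rw [← hq]
    rw [pow_apply_of_apply_eq hσb, hσb, pow_zero, RingAut.one_apply, pow_add]
    ring

theorem apply_eq_of_mul_monoPowCoeff_comm {σ : RingAut S} {m k : ℕ} {b α : S} (hα : IsUnit α)
    (hk : 2 ≤ k) (hkm : k < m) (hD : ∀ i < m, σ ^ (i * k % m) = σ ^ i)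
    (hcomm : ∀ j < m, α * (σ ^ k) (monoPowCoeff σ m b α k j)
      = monoPowCoeff σ m b α k j * (σ ^ (j * k % m)) α) : σ b = b := by
  obtain ⟨j, hj, hjk⟩ := exists_lt_mul_div_eq_one hk hkm
  have hσk : σ ^ k = σ := by simpa [Nat.mod_eq_of_lt hkm] using hD 1 (by omega)
  have h := hcomm j hj
  have hσs : σ ((σ ^ j) b) = (σ ^ j) (σ b) := by
    rw [← RingAut.mul_apply, ← RingAut.mul_apply, ← pow_succ', ← pow_succ]
  rw [monoPowCoeff_eq_of_lt b α hkm hD hj, hσk, hD j hj, hjk, pow_one, map_mul, hσs,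
    ← mul_assoc, ← pnorm_succ, mul_right_comm, ← pnorm_succ'] at h
  exact (σ ^ j).injective ((hα.pnorm σ (j + 1)).mul_left_cancel h)

section MonomialIsomorphism

variable {σ τ : RingAut S} {m k : ℕ} {a b α : S} {G : (Fin m → S) → (Fin m → S)}

theorem IsPetitHom.map_mono (hG : IsPetitHom σ m (constF m a) (constF m b) G)
    (hres : ∀ c, G (mono m c 0) = mono m (τ c) 0) (hGX : G (mono m 1 1) = mono m α k)
    (hk : k < m) (c : S) {i : ℕ} (hi : i < m) :
    G (mono m c i) = mono m (τ c * monoPowCoeff σ m b α k i) (i * k % m) := by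
  rw [← mul_one c, ← petitMul_mono_zero_left σ a c 1 hi, ← lpow_X_of_lt σ a hi, hG.2.1,
    hres, hG.map_lpow, hGX, lpow_mono σ b α hk, mul_one,
    petitMul_mono_zero_left σ b _ _ (Nat.mod_lt _ (by omega))]

theorem IsPetitHom.eq_of_mul_mod_eq [Nontrivial S]
    (hG : IsPetitHom σ m (constF m a) (constF m b) G)
    (hres : ∀ c, G (mono m c 0) = mono m (τ c) 0) (hGX : G (mono m 1 1) = mono m α k)
    (hk : k < m) (hwtG : ∀ x, hwt (G x) = hwt x) {i j : ℕ} (hi : i < m) (hj : j < m)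
    (hij : i * k % m = j * k % m) : i = j := by
  by_contra hne
  have h := hwtG (mono m 1 i + mono m 1 j)
  rw [hwt_mono_one_add_mono_one hi hj hne, hG.1, hG.map_mono hres hGX hk _ hi,
    hG.map_mono hres hGX hk _ hj, hij, mono_add_mono] at h
  exact absurd (h.symm.trans_le (hwt_mono_le_one m _ _)) (by norm_num)

theorem IsPetitHom.isUnit_of_surjective [Nontrivial S]
    (hG : IsPetitHom σ m (constF m a) (constF m b) G) (hsurj : Function.Surjective G)
    (hres : ∀ c, G (mono m c 0) = mono m (τ c) 0) (hGX : G (mono m 1 1) = mono m α k)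
    (hk : k < m) (hm : 1 < m) (hwtG : ∀ x, hwt (G x) = hwt x) : IsUnit α := by
  obtain ⟨y, hy⟩ := hsurj (mono m 1 k)
  obtain ⟨i, hyi⟩ := exists_eq_mono_of_hwt_eq_one (show hwt y = 1 by
    rw [← hwtG, hy, hwt_mono_one hk])
  rw [hyi, hG.map_mono hres hGX hk _ i.isLt] at hy
  obtain ⟨hik, hunit⟩ := eq_of_mono_eq_mono_one hk hy
  have hi1 : (i : ℕ) = 1 :=
    hG.eq_of_mul_mod_eq hres hGX hk hwtG i.isLt hm (by rw [hik, one_mul, Nat.mod_eq_of_lt hk])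
  rw [hi1] at hunit
  refine IsUnit.of_mul_eq_one_right (τ (y i)) ?_
  simpa [monoPowCoeff, Nat.div_eq_of_lt hk] using hunit

theorem IsPetitHom.pow_mul_mod_eq_pow (hG : IsPetitHom σ m (constF m a) (constF m b) G)
    (hres : ∀ c, G (mono m c 0) = mono m (τ c) 0) (hGX : G (mono m 1 1) = mono m α k)
    (hk : k < m) (hcomm : ∀ x, τ (σ x) = σ (τ x)) (hb : IsUnit b) (hα : IsUnit α)
    {i : ℕ} (hi : i < m) : σ ^ (i * k % m) = σ ^ i := by
  have hτσ : ∀ x, τ ((σ ^ i) x) = (σ ^ i) (τ x) :=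
    DFunLike.congr_fun ((show Commute τ σ from RingEquiv.ext hcomm).pow_right i)
  have hD := Nat.mod_lt (i * k) (show 0 < m by omega)
  refine RingEquiv.ext fun y => ?_
  obtain ⟨x, rfl⟩ := τ.surjective y
  have h : petitMul σ m (constF m a) (mono m 1 i) (mono m x 0)
      = petitMul σ m (constF m a) (mono m ((σ ^ i) x) 0) (mono m 1 i) := by
    rw [petitMul_mono_zero_right σ a _ _ hi, petitMul_mono_zero_left σ a _ _ hi, one_mul, mul_one]
  replace h := congrArg G h
  rw [hG.2.1, hG.2.1, hres, hres, hG.map_mono hres hGX hk _ hi, map_one, one_mul,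
    petitMul_mono_zero_right σ b _ _ hD, petitMul_mono_zero_left σ b _ _ hD, hτσ] at h
  exact (isUnit_monoPowCoeff σ m hb hα k i).mul_left_cancel
    ((mono_injective hD h).trans (mul_comm _ _))

theorem IsPetitHom.mul_monoPowCoeff_comm (hG : IsPetitHom σ m (constF m a) (constF m b) G)
    (hres : ∀ c, G (mono m c 0) = mono m (τ c) 0) (hGX : G (mono m 1 1) = mono m α k)
    (hm : 1 < m) (hk : k < m) (hb : IsUnit b) {j : ℕ} (hj : j < m) :
    α * (σ ^ k) (monoPowCoeff σ m b α k j)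
      = monoPowCoeff σ m b α k j * (σ ^ (j * k % m)) α := by
  have hD := Nat.mod_lt (j * k) (show 0 < m by omega)
  have h := congrArg G (petitMul_X_comm σ a hm hj)
  rw [hG.2.1, hG.2.1, hGX, hG.map_mono hres hGX hk _ hj, map_one, one_mul,
    petitMul_mono_mono σ b _ _ hk hD, petitMul_mono_mono σ b _ _ hD hk, add_comm k] at h
  exact ((hb.map _).pow _).mul_right_cancel (mono_injective (Nat.mod_lt _ (by omega)) h)

theorem IsPetitHom.exists_eq_pnorm_mul_pow [Nontrivial S]
    (hG : IsPetitHom σ m (constF m a) (constF m b) G) (hsurj : Function.Surjective G)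
    (hres : ∀ c, G (mono m c 0) = mono m (τ c) 0) (hwtG : ∀ x, hwt (G x) = hwt x)
    (hcomm : ∀ x, τ (σ x) = σ (τ x)) (hb : IsUnit b) (hm : 1 < m) :
    ∃ α : S, IsUnit α ∧ ∃ k : ℕ, k.Coprime m ∧ (k = 1 ∨ σ b = b) ∧
      τ a = pnorm σ m α * b ^ k := by
  obtain ⟨κ, hGX⟩ := exists_eq_mono_of_hwt_eq_one
    (show hwt (G (mono m 1 1)) = 1 by rw [hwtG, hwt_mono_one hm])
  set α := G (mono m 1 1) κ
  set k : ℕ := (κ : ℕ)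
  have hk : k < m := κ.isLt
  have hα : IsUnit α := hG.isUnit_of_surjective hsurj hres hGX hk hm hwtG
  have hD : ∀ i < m, σ ^ (i * k % m) = σ ^ i := fun i hi =>
    hG.pow_mul_mod_eq_pow hres hGX hk hcomm hb hα hi
  have hcop : k.Coprime m :=
    coprime_of_injOn_mul_mod (by omega) (hG.eq_of_mul_mod_eq hres hGX hk hwtG)
  have hkb : k = 1 ∨ σ b = b := by
    rcases (show k = 0 ∨ k = 1 ∨ 2 ≤ k by omega) with h0 | h1 | h2
    · rw [h0, Nat.coprime_zero_left] at hcop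
      omega
    · exact Or.inl h1
    · exact Or.inr (apply_eq_of_mul_monoPowCoeff_comm hα h2 hk hD
        fun j hj => hG.mul_monoPowCoeff_comm hres hGX hm hk hb hj)
  refine ⟨α, hα, k, hcop, hkb, ?_⟩
  have h := hG.map_lpow (mono m 1 1) m
  rw [lpow_X_self σ a hm, hres, hGX, lpow_mono σ b α hk, Nat.mul_mod_right,
    monoPowCoeff_self b α hm hk hD hkb] at h
  exact mono_injective (by omega) h

end MonomialIsomorphism

end PetitFormal

theorem stmt13_general {S : Type*} [CommRing S] (σ τ : RingAut S) (m : ℕ) (hm : 0 < m)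
    (hcomm : ∀ x, τ (σ x) = σ (τ x)) (a b : Sˣ)
    (G : (Fin m → S) → (Fin m → S))
    (hhom : IsPetitHom σ m (constF m (a : S)) (constF m (b : S)) G)
    (hbij : Function.Bijective G)
    (hres : ∀ c : S, G (mono m c 0) = mono m (τ c) 0)
    (hwtp : ∀ x, hwt (G x) = hwt x) :
    Subgroup.closure ({b} ∪ {u : Sˣ | ∃ α : Sˣ, (u : S) = pnorm σ m (α : S)})
      = Subgroup.closure
          ({Units.map τ.toRingHom.toMonoidHom a} ∪
            {u : Sˣ | ∃ α : Sˣ, (u : S) = pnorm σ m (α : S)}) := by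
  rcases subsingleton_or_nontrivial S with hS | hS
  · exact Subsingleton.elim _ _
  obtain rfl | hm : m = 1 ∨ 1 < m := by omega
  · have htop (c : Sˣ) :
        Subgroup.closure ({c} ∪ {u : Sˣ | ∃ α : Sˣ, (u : S) = pnorm σ 1 α}) = ⊤ :=
      eq_top_iff.mpr fun u _ => Subgroup.subset_closure (Or.inr ⟨u, by simp [pnorm]⟩)
    rw [htop, htop]
  obtain ⟨α, hα, k, hcop, hkb, hτa⟩ :=
    hhom.exists_eq_pnorm_mul_pow hbij.2 hres hwtp hcomm b.isUnit hm
  set ν := (hα.pnorm σ m).unit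
  have hν : ν ∈ {u : Sˣ | ∃ α : Sˣ, (u : S) = pnorm σ m α} :=
    ⟨hα.unit, by simp [ν]⟩
  have hτ : Units.map τ.toRingHom.toMonoidHom a = ν * b ^ k := Units.ext (by simp [ν, hτa])
  rw [hτ]
  rcases hkb with rfl | hσb
  · exact Subgroup.closure_singleton_union_eq_mul_pow hν (e := 0) (by simp)
      (Nat.coprime_one_left 0)
  · exact Subgroup.closure_singleton_union_eq_mul_pow hν
      (Subgroup.subset_closure ⟨b, by simp [pnorm_of_apply_eq hσb]⟩) hcop

/-- Lemma `le:3.2 general with b in S.II`: if there is a Hamming-weight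
preserving isomorphism `G : S_a → S_b` with `G|_S = τ` commuting with `σ`,
then `⟨b, N_m^σ(S^×)⟩ = ⟨τ(a), N_m^σ(S^×)⟩` as subgroups of `S^×`. -/
theorem stmt13 {S : Type*} [CommRing S] (σ τ : RingAut S) (n : ℕ)
    (hn : orderOf σ = n) (hn0 : 0 < n) (m : ℕ) (hm : 0 < m)
    (hcomm : ∀ x, τ (σ x) = σ (τ x)) (a b : Sˣ)
    (G : (Fin m → S) → (Fin m → S))
    (hhom : IsPetitHom σ m (constF m (a : S)) (constF m (b : S)) G)
    (hbij : Function.Bijective G)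
    (hres : ∀ c : S, G (mono m c 0) = mono m (τ c) 0)
    (hwtp : ∀ x, hwt (G x) = hwt x) :
    Subgroup.closure ({b} ∪ {u : Sˣ | ∃ α : Sˣ, (u : S) = pnorm σ m (α : S)})
      = Subgroup.closure
          ({Units.map τ.toRingHom.toMonoidHom a} ∪
            {u : Sˣ | ∃ α : Sˣ, (u : S) = pnorm σ m (α : S)}) :=
  stmt13_general σ τ m hm hcomm a b G hhom hbij hres hwtp
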